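/- Fix a directed edge e and suppose ‖x‖_∞ = max_{ē∈E} |x_ē| < 1/(Δ−1), where Δ ≥ 2 is the maximum vertex degree of 𝒢. Then Σ_ℓ λ(ℓ)/|ℓ| = 0, where the sum ranges over all rooted loops ℓ that visit both e and −e at least once. -/

import Mathlib

/-
A loop through both `e` and `-e` can be cut at its first visit `f ∈ {e, -e}` and at its last
visit of `-f`; reversing the stretch in between is a length-preserving involution on such loops
which negates `λ`, so the sum equals its own negative. Along a walk, `λ` is the product of the
edge weights, which reversal only permutes, and of the half-angle phases `exp (i∠/2)`. Reversal
inverts every phase, because in a plane graph no turning angle is `π` (a U-turn along a line would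
put a vertex inside an edge). The squared phases telescope to the ratio of the unit directions of
the last and first edges, which is `-1` for a stretch from `f` to `-f`; so its phase product `P`
satisfies `P⁻¹ = -P`.
-/

open scoped BigOperators

/-- The straight line segment drawn for an (unordered) edge, given the
positions of the vertices in the complex plane. -/
def segOf {α : Type*} (pos : α → ℂ) : Sym2 α → Set ℂ :=
  Sym2.lift ⟨fun u v => segment ℝ (pos u) (pos v), fun u v => segment_symm ℝ (pos u) (pos v)⟩

/-- A finite graph embedded in the complex plane: vertices are distinct points
of `ℂ`, edges are unordered pairs of distinct vertices drawn as straight line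
segments which pairwise intersect only at common endpoints, and no vertex lies
on an edge which does not contain it. -/
structure PlaneGraph where
  V : Type
  fintypeV : Fintype V
  decEqV : DecidableEq V
  pos : V → ℂ
  pos_inj : Function.Injective pos
  E : Finset (Sym2 V)
  not_diag : ∀ e ∈ E, ¬ e.IsDiag
  edges_meet : ∀ e₁ ∈ E, ∀ e₂ ∈ E, e₁ ≠ e₂ → ∀ p : ℂ,
    p ∈ segOf pos e₁ → p ∈ segOf pos e₂ → ∃ w : V, w ∈ e₁ ∧ w ∈ e₂ ∧ p = pos w
  vertex_on_edge : ∀ e ∈ E, ∀ w : V, pos w ∈ segOf pos e → w ∈ e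

attribute [instance] PlaneGraph.fintypeV PlaneGraph.decEqV

namespace PlaneGraph

variable (G : PlaneGraph)

/-- A directed edge: an ordered pair of vertices whose underlying
unordered pair is an edge of the graph. -/
abbrev DEdge : Type := {p : G.V × G.V // s(p.1, p.2) ∈ G.E}

/-- The reversal `-e` of a directed edge. -/
def rev (e : G.DEdge) : G.DEdge :=
  ⟨(e.val.2, e.val.1), by rw [Sym2.eq_swap]; exact e.property⟩

/-- The undirected version `ē` of a directed edge. -/
def undir (e : G.DEdge) : Sym2 G.V := s(e.val.1, e.val.2)

/-- The turning angle `∠(e,g) = Arg((h_g - t_g)/(h_e - t_e)) ∈ (-π, π]`. -/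
noncomputable def tangle (e g : G.DEdge) : ℝ :=
  Complex.arg ((G.pos g.val.2 - G.pos g.val.1) / (G.pos e.val.2 - G.pos e.val.1))

/-- The Kac–Ward transition matrix `Λ`, indexed by directed edges. -/
noncomputable def transMatrix (x : Sym2 G.V → ℝ) : Matrix G.DEdge G.DEdge ℂ :=
  fun e g =>
    if e.val.2 = g.val.1 ∧ g ≠ G.rev e then
      (x (G.undir e) : ℂ) * Complex.exp (Complex.I / 2 * (G.tangle e g : ℂ))
    else 0

/-- A non-backtracking walk of length `n ≥ 1`, encoded as the list
`(w₁, …, w_{n+1})` of its `n+1` directed edges: consecutive edges are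
incident head-to-tail and the walk never immediately reverses an edge. -/
def IsWalk (l : List G.DEdge) : Prop :=
  2 ≤ l.length ∧ l.Chain' (fun e g => e.val.2 = g.val.1 ∧ g ≠ G.rev e)

/-- The length `|w|` (number of steps) of a walk given as a list of edges. -/
def len (l : List G.DEdge) : ℕ := l.length - 1

/-- The weight `λ(w) = ∏_{i=1}^{n} Λ_{w_i, w_{i+1}}` of a walk. -/
noncomputable def wlam (x : Sym2 G.V → ℝ) (l : List G.DEdge) : ℂ :=
  (List.zipWith (fun e g => G.transMatrix x e g) l l.tail).prod

/-- The edge weight `x(w) = ∏_{i=1}^{n} x_{\bar{w_i}}` of a walk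
(the weight of the last edge is not included). -/
def wx (x : Sym2 G.V → ℝ) (l : List G.DEdge) : ℝ :=
  (l.dropLast.map (fun e => x (G.undir e))).prod

/-- The total turning angle `α(w) = Σ_{i=1}^{n} ∠(w_i, w_{i+1})` of a walk. -/
noncomputable def walpha (l : List G.DEdge) : ℝ :=
  (List.zipWith (fun e g => G.tangle e g) l l.tail).sum

/-- The reversal `w⁻¹ = (-w_{n+1}, …, -w₁)` of a walk. -/
def wrev (l : List G.DEdge) : List G.DEdge := (l.map G.rev).reverse

/-- The concatenation `w ⊕ w'` of two walks, the first ending with the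
directed edge with which the second starts. -/
def wconcat (l l' : List G.DEdge) : List G.DEdge := l ++ l'.tail

/-- A (rooted) loop: a walk of length at least `2` which starts and ends
with the same directed edge. -/
def IsLoop (l : List G.DEdge) : Prop :=
  G.IsWalk l ∧ 3 ≤ l.length ∧ l.head? = l.getLast?

/-- The number of times a loop `ℓ = (ℓ₁, …, ℓ_{n+1})` visits a directed
edge `e`, i.e. the number of occurrences of `e` among `ℓ₁, …, ℓ_n`. -/
def visits (l : List G.DEdge) (e : G.DEdge) : ℕ := l.dropLast.count e

/-- A loop `ℓ` of length `n` is self-avoiding if each vertex appearing in it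
appears in exactly two of the directed edges `ℓ₁, …, ℓ_n`. -/
def SelfAvoiding (l : List G.DEdge) : Prop :=
  G.IsLoop l ∧ ∀ v : G.V,
    l.dropLast.countP (fun e => decide (v = e.val.1 ∨ v = e.val.2)) ≠ 0 →
    l.dropLast.countP (fun e => decide (v = e.val.1 ∨ v = e.val.2)) = 2

/-- The degree of a vertex: the number of edges containing it. -/
def degV (v : G.V) : ℕ := (G.E.filter (fun e => v ∈ e)).card

/-- A finite set of edges is even if every vertex belongs to an even number
of its edges. -/
def IsEvenSet (H : Finset (Sym2 G.V)) : Prop :=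
  ∀ v : G.V, Even ((H.filter (fun e => v ∈ e)).card)

instance : DecidablePred G.IsEvenSet := fun H =>
  decidable_of_iff (∀ v : G.V, Even ((H.filter (fun e => v ∈ e)).card)) Iff.rfl

/-- The generating function `Z = Σ_{H even} ∏_{ē ∈ H} x_ē` of even
subgraphs. -/
def Z (x : Sym2 G.V → ℝ) : ℝ :=
  ∑ H ∈ G.E.powerset.filter G.IsEvenSet, ∏ e ∈ H, x e

end PlaneGraph


section AdjProd

variable {α β M : Type*}

def adjProd [Monoid M] (g : α → α → M) (l : List α) : M := (List.zipWith g l l.tail).prod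

section Monoid

variable [Monoid M] (g : α → α → M)

@[simp] lemma adjProd_nil : adjProd g [] = 1 := rfl

@[simp] lemma adjProd_singleton (a : α) : adjProd g [a] = 1 := rfl

@[simp] lemma adjProd_cons_cons (a b : α) (l : List α) :
    adjProd g (a :: b :: l) = g a b * adjProd g (b :: l) := by
  simp [adjProd]

lemma adjProd_append_cons (A : List α) (a : α) (R : List α) :
    adjProd g (A ++ a :: R) = adjProd g (A ++ [a]) * adjProd g (a :: R) := by
  induction A with
  | nil => simp
  | cons b A ih =>
    cases A with
    | nil => simp
    | cons c A => simp only [List.cons_append] at ih ⊢; simp [ih, mul_assoc]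

lemma adjProd_append_cons_append_cons (A : List α) (a : α) (M : List α) (z : α) (R : List α) :
    adjProd g (A ++ a :: (M ++ z :: R)) =
      adjProd g (A ++ [a]) * adjProd g (a :: (M ++ [z])) * adjProd g (z :: R) := by
  rw [adjProd_append_cons, show a :: (M ++ z :: R) = (a :: M) ++ z :: R from rfl,
    adjProd_append_cons g (a :: M), List.cons_append, mul_assoc]

lemma adjProd_congr {R : α → α → Prop} {g' : α → α → M} {l : List α} (hl : l.IsChain R)
    (hg : ∀ a b, R a b → g a b = g' a b) : adjProd g l = adjProd g' l := by
  induction hl with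
  | nil => rfl
  | singleton => rfl
  | cons_cons hab _ ih => simp [hg _ _ hab, ih]

lemma adjProd_map (σ : β → α) (l : List β) :
    adjProd g (l.map σ) = adjProd (fun a b => g (σ a) (σ b)) l := by
  simp [adjProd, ← List.map_tail, List.zipWith_map]

end Monoid

section CommMonoid

variable [CommMonoid M]

lemma adjProd_mul (g h : α → α → M) (l : List α) :
    adjProd (fun a b => g a b * h a b) l = adjProd g l * adjProd h l := by
  induction l with
  | nil => simp
  | cons a l ih => cases l with
    | nil => simp
    | cons b l => simp only [adjProd_cons_cons, ih]; exact mul_mul_mul_comm ..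

lemma adjProd_fst (h : α → M) (l : List α) :
    adjProd (fun a _ => h a) l = (l.dropLast.map h).prod := by
  induction l with
  | nil => simp
  | cons a l ih => cases l with
    | nil => simp
    | cons b l =>
      rw [adjProd_cons_cons, ih, List.dropLast_cons_cons, List.map_cons, List.prod_cons]

lemma adjProd_snd (h : α → M) (l : List α) :
    adjProd (fun _ b => h b) l = (l.tail.map h).prod := by
  induction l with
  | nil => simp
  | cons a l ih => cases l with
    | nil => simp
    | cons b l => rw [adjProd_cons_cons, ih]; simp

lemma adjProd_reverse (g : α → α → M) (l : List α) :
    adjProd g l.reverse = adjProd (fun a b => g b a) l := by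
  induction l with
  | nil => simp
  | cons a l ih => cases l with
    | nil => simp
    | cons b l =>
      rw [List.reverse_cons, List.reverse_cons, List.append_assoc, List.singleton_append,
        adjProd_append_cons, ← List.reverse_cons, ih, adjProd_cons_cons, adjProd_cons_cons,
        adjProd_singleton, mul_one, mul_comm]

end CommMonoid

lemma adjProd_inv [DivisionCommMonoid M] (g : α → α → M) (l : List α) :
    adjProd (fun a b => (g a b)⁻¹) l = (adjProd g l)⁻¹ := by
  induction l with
  | nil => simp
  | cons a l ih => cases l with
    | nil => simp
    | cons b l => rw [adjProd_cons_cons, ih, adjProd_cons_cons, mul_inv]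

lemma adjProd_div_eq [CommGroupWithZero M] (u : α → M) (hu : ∀ a, u a ≠ 0) (a : α)
    (l : List α) :
    adjProd (fun a b => u b / u a) (a :: l) =
      u ((a :: l).getLast (List.cons_ne_nil a l)) / u a := by
  induction l generalizing a with
  | nil => simp [div_self (hu a)]
  | cons b l ih =>
    rw [adjProd_cons_cons, ih, List.getLast_cons_cons, mul_comm, div_mul_div_cancel₀ (hu b)]

end AdjProd

lemma List.exists_eq_append_cons_of_exists {α : Type*} {p : α → Prop} {l : List α}
    (h : ∃ a ∈ l, p a) : ∃ A b R, l = A ++ b :: R ∧ (∀ a ∈ A, ¬p a) ∧ p b := by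
  induction l with
  | nil => simp at h
  | cons c l ih =>
    by_cases hc : p c
    · exact ⟨[], c, l, rfl, by simp, hc⟩
    · obtain ⟨A, b, R, rfl, hA, hb⟩ := ih (by simpa [hc] using h)
      exact ⟨c :: A, b, R, rfl, by simpa [hc] using hA, hb⟩

lemma List.exists_eq_append_cons_not_mem {α : Type*} {a : α} {l : List α} (h : a ∈ l) :
    ∃ M B, l = M ++ a :: B ∧ a ∉ B := by
  induction l with
  | nil => simp at h
  | cons c l ih =>
    by_cases ha : a ∈ l
    · obtain ⟨M, B, rfl, hB⟩ := ih ha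
      exact ⟨c :: M, B, rfl, hB⟩
    · have hc : a = c := by simpa [ha] using h
      exact ⟨[], l, by rw [hc]; rfl, ha⟩

lemma List.IsChain.replace_middle {α : Type*} {R : α → α → Prop} {A b b' C : List α}
    (h : (A ++ b ++ C).IsChain R) (hb' : b'.IsChain R) (hhead : b'.head? = b.head?)
    (hlast : b'.getLast? = b.getLast?) : (A ++ b' ++ C).IsChain R := by
  rw [List.isChain_append, List.isChain_append] at h ⊢
  obtain ⟨⟨hA, -, hAb⟩, hC, hbC⟩ := h
  refine ⟨⟨hA, hb', by rwa [hhead]⟩, hC, ?_⟩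
  simpa only [List.getLast?_append, hlast] using hbC

lemma tsum_eq_zero_of_involutive {α β : Type*} [AddCommGroup α] [TopologicalSpace α]
    [IsTopologicalAddGroup α] [T2Space α] [IsAddTorsionFree α] {f : β → α} {T : β → β}
    (hT : Function.Involutive T) (hf : ∀ b, f (T b) = -f b) : ∑' b, f b = 0 :=
  self_eq_neg.mp <| calc
    ∑' b, f b = ∑' b, f (T b) := (Equiv.tsum_eq hT.toPerm f).symm
    _ = ∑' b, -f b := tsum_congr hf
    _ = -∑' b, f b := tsum_neg

namespace PlaneGraph

variable {G : PlaneGraph}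

variable (G) in
def IsStep (a b : G.DEdge) : Prop := a.val.2 = b.val.1 ∧ b ≠ G.rev a

lemma fst_ne_snd (a : G.DEdge) : a.val.1 ≠ a.val.2 :=
  fun h => G.not_diag _ a.property (Sym2.mk_isDiag_iff.mpr h)

@[simp] lemma rev_rev (a : G.DEdge) : G.rev (G.rev a) = a := rfl

lemma rev_ne_self (a : G.DEdge) : G.rev a ≠ a :=
  fun h => fst_ne_snd a (congrArg (fun d : G.DEdge => d.val.2) h)

@[simp] lemma undir_rev (a : G.DEdge) : G.undir (G.rev a) = G.undir a := Sym2.eq_swap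

lemma IsStep.rev {a b : G.DEdge} (h : G.IsStep a b) : G.IsStep (G.rev b) (G.rev a) :=
  ⟨h.1.symm, fun hba => h.2 (by rw [hba, rev_rev])⟩

@[simp] lemma wrev_wrev (l : List G.DEdge) : G.wrev (G.wrev l) = l := by
  simp [wrev, Function.comp_def]

lemma isChain_wrev {l : List G.DEdge} (h : l.IsChain G.IsStep) : (G.wrev l).IsChain G.IsStep := by
  rw [PlaneGraph.wrev, List.isChain_reverse, List.isChain_map]
  exact h.imp fun _ _ hab => hab.rev

lemma rev_mem_pair {e f : G.DEdge} (hf : f ∈ [e, G.rev e]) : G.rev f ∈ [e, G.rev e] := by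
  simp only [List.mem_cons, List.not_mem_nil, or_false] at hf ⊢
  rcases hf with rfl | rfl <;> simp

lemma IsLoop.dropLast_append_take_one {l : List G.DEdge} (h : G.IsLoop l) :
    l.dropLast ++ l.dropLast.take 1 = l := by
  obtain ⟨-, hlen, hhead⟩ := h
  match l, hlen with
  | a :: b :: t, _ =>
    rw [List.dropLast_cons_cons, List.take_succ_cons, List.take_zero, ← List.dropLast_cons_cons]
    exact List.dropLast_append_getLast? a hhead.symm

def dir (a : G.DEdge) : ℂ := G.pos a.val.2 - G.pos a.val.1

lemma dir_ne_zero (a : G.DEdge) : dir a ≠ 0 :=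
  sub_ne_zero.mpr fun h => fst_ne_snd a (G.pos_inj h.symm)

@[simp] lemma dir_rev (a : G.DEdge) : dir (G.rev a) = -dir a := by
  simp [dir, PlaneGraph.rev]

lemma tangle_eq_arg (a b : G.DEdge) : G.tangle a b = Complex.arg (dir b / dir a) := rfl

lemma eq_rev_of_dir_eq {a b : G.DEdge} (hab : a.val.2 = b.val.1) {r : ℝ}
    (hr : r ∈ Set.Icc (-1) 0) (hdir : dir b = r * dir a) : b = G.rev a := by
  have hseg : G.pos b.val.2 ∈ segOf G.pos (G.undir a) := by
    refine ⟨-r, 1 + r, by linarith [hr.2], by linarith [hr.1], by ring, ?_⟩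
    have : G.pos b.val.2 = G.pos a.val.2 + r * dir a := by
      rw [← hdir, dir, ← hab]; ring
    rw [this, dir, Complex.real_smul, Complex.real_smul]
    push_cast
    ring
  rcases Sym2.mem_iff.mp (G.vertex_on_edge _ a.property _ hseg) with h | h
  · exact Subtype.ext (Prod.ext hab.symm h)
  · exact absurd (hab.symm.trans h.symm) (fst_ne_snd b)

lemma tangle_ne_pi {a b : G.DEdge} (h : G.IsStep a b) : G.tangle a b ≠ Real.pi := by
  intro hpi
  rw [tangle_eq_arg] at hpi
  obtain ⟨hre, him⟩ := Complex.arg_eq_pi_iff.mp hpi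
  set r := (dir b / dir a).re
  have hdir : dir b = r * dir a := by
    rw [← div_mul_cancel₀ (dir b) (dir_ne_zero a)]
    congr 1
    exact Complex.ext rfl (by simpa using him)
  rcases le_or_gt (-1) r with hr | hr
  · exact h.2 (eq_rev_of_dir_eq h.1 ⟨hr, hre.le⟩ hdir)
  · -- `r < -1`: the same argument applies to the reversed pair `(-b, -a)`
    have hr0 : (r : ℂ) ≠ 0 := by exact_mod_cast (show r ≠ 0 by linarith)
    have hdir' : dir (G.rev a) = (r⁻¹ : ℝ) * dir (G.rev b) := by
      rw [dir_rev, dir_rev, hdir]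
      push_cast
      field_simp
    have hinv : r⁻¹ ∈ Set.Icc (-1) 0 :=
      ⟨by rw [le_inv_of_neg (by norm_num) (by linarith)]; linarith,
        (inv_neg''.mpr (by linarith)).le⟩
    exact h.2 (eq_rev_of_dir_eq (b := G.rev a) h.1.symm hinv hdir').symm

lemma tangle_rev {a b : G.DEdge} (h : G.IsStep a b) :
    G.tangle (G.rev b) (G.rev a) = -G.tangle a b := by
  rw [tangle_eq_arg, tangle_eq_arg, dir_rev, dir_rev, neg_div_neg_eq, ← inv_div,
    Complex.arg_inv]
  exact if_neg (tangle_ne_pi h)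

variable (G) in
noncomputable def phase (a b : G.DEdge) : ℂ :=
  Complex.exp (Complex.I / 2 * G.tangle a b)

lemma transMatrix_of_isStep (x : Sym2 G.V → ℝ) {a b : G.DEdge} (h : G.IsStep a b) :
    G.transMatrix x a b = x (G.undir a) * G.phase a b :=
  if_pos h

lemma phase_rev {a b : G.DEdge} (h : G.IsStep a b) :
    G.phase (G.rev b) (G.rev a) = (G.phase a b)⁻¹ := by
  rw [phase, phase, tangle_rev h, ← Complex.exp_neg]
  push_cast
  ring_nf

noncomputable def unitDir (a : G.DEdge) : ℂ := dir a / ‖dir a‖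

lemma unitDir_ne_zero (a : G.DEdge) : unitDir a ≠ 0 :=
  div_ne_zero (dir_ne_zero a) (by exact_mod_cast norm_ne_zero_iff.mpr (dir_ne_zero a))

@[simp] lemma unitDir_rev (a : G.DEdge) : unitDir (G.rev a) = -unitDir a := by
  simp [unitDir, neg_div]

lemma phase_mul_self (a b : G.DEdge) : G.phase a b * G.phase a b = unitDir b / unitDir a := by
  have ha : (‖dir a‖ : ℂ) ≠ 0 := by exact_mod_cast norm_ne_zero_iff.mpr (dir_ne_zero a)
  have hb : (‖dir b‖ : ℂ) ≠ 0 := by exact_mod_cast norm_ne_zero_iff.mpr (dir_ne_zero b)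
  have hz := Complex.norm_mul_exp_arg_mul_I (dir b / dir a)
  rw [norm_div] at hz
  push_cast at hz
  rw [phase, ← Complex.exp_add, show Complex.I / 2 * G.tangle a b + Complex.I / 2 * G.tangle a b
    = (dir b / dir a).arg * Complex.I by rw [tangle_eq_arg]; ring, unitDir, unitDir]
  field_simp at hz ⊢
  linear_combination hz

lemma wlam_eq_adjProd (x : Sym2 G.V → ℝ) (l : List G.DEdge) :
    G.wlam x l = adjProd (fun a b => G.transMatrix x a b) l := rfl

lemma wrev_block (f : G.DEdge) (M : List G.DEdge) :
    G.wrev (f :: (M ++ [G.rev f])) = f :: (G.wrev M ++ [G.rev f]) := by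
  simp [wrev]

lemma adjProd_phase_block (f : G.DEdge) (M : List G.DEdge) :
    adjProd G.phase (f :: (M ++ [G.rev f])) * adjProd G.phase (f :: (M ++ [G.rev f])) = -1 := by
  rw [← adjProd_mul]
  simp_rw [phase_mul_self]
  rw [adjProd_div_eq _ unitDir_ne_zero]
  simp [neg_div, div_self (unitDir_ne_zero f)]

lemma wlam_wrev_block (x : Sym2 G.V → ℝ) {f : G.DEdge} {M : List G.DEdge}
    (h : (f :: (M ++ [G.rev f])).IsChain G.IsStep) :
    G.wlam x (f :: (G.wrev M ++ [G.rev f])) = -G.wlam x (f :: (M ++ [G.rev f])) := by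
  set b := f :: (M ++ [G.rev f])
  set xu : G.DEdge → ℂ := fun a => (x (G.undir a) : ℂ)
  set P := adjProd G.phase b
  have hforward : G.wlam x b = (b.dropLast.map xu).prod * P := by
    rw [wlam_eq_adjProd, adjProd_congr _ h (g' := fun a c => xu a * G.phase a c)
      fun a c hac => transMatrix_of_isStep x hac, adjProd_mul, adjProd_fst]
  have hbackward : G.wlam x (G.wrev b) = (b.tail.map xu).prod * P⁻¹ := by
    rw [wlam_eq_adjProd, wrev, adjProd_reverse, adjProd_map,
      adjProd_congr _ h (g' := fun a c => xu c * (G.phase a c)⁻¹)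
        fun a c hac => by rw [transMatrix_of_isStep x hac.rev, undir_rev, phase_rev hac],
      adjProd_mul, adjProd_snd, adjProd_inv]
  have hxu : (b.tail.map xu).prod = (b.dropLast.map xu).prod := by
    rw [show b.dropLast = f :: M from List.dropLast_concat (l₁ := f :: M),
      show b.tail = M ++ [G.rev f] from rfl]
    simp [xu, mul_comm]
  have hinv : P⁻¹ = -P :=
    inv_eq_of_mul_eq_one_right (by rw [mul_neg, adjProd_phase_block, neg_neg])
  rw [← wrev_block, hbackward, hforward, hxu, hinv, mul_neg]

section Flip

variable (e : G.DEdge)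

/-- Reverses the stretch of the cycle `c` strictly between its first visit `f` of `e` or `-e` and
its last visit of `-f`. -/
def flipCycle (c : List G.DEdge) : List G.DEdge :=
  match c.dropWhile (· ∉ [e, G.rev e]) with
  | [] => c
  | f :: r =>
    c.takeWhile (· ∉ [e, G.rev e]) ++
      f :: (G.wrev (r.reverse.dropWhile (· ≠ G.rev f)).tail.reverse ++
        G.rev f :: (r.reverse.takeWhile (· ≠ G.rev f)).reverse)

def flipLoop (l : List G.DEdge) : List G.DEdge := flipCycle e l.dropLast ++ l.take 1

/-- The loop around the cycle `A f M (-f) B`; `(A ++ [f]).take 1` is its first edge. -/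
def loopOf (A : List G.DEdge) (f : G.DEdge) (M B : List G.DEdge) : List G.DEdge :=
  A ++ f :: (M ++ G.rev f :: B) ++ (A ++ [f]).take 1

def VisitsBoth (l : List G.DEdge) : Prop :=
  G.IsLoop l ∧ 1 ≤ G.visits l e ∧ 1 ≤ G.visits l (G.rev e)

variable {e}

lemma flipCycle_eq {A M B : List G.DEdge} {f : G.DEdge} (hA : ∀ a ∈ A, a ∉ [e, G.rev e])
    (hf : f ∈ [e, G.rev e]) (hB : G.rev f ∉ B) :
    flipCycle e (A ++ f :: (M ++ G.rev f :: B)) = A ++ f :: (G.wrev M ++ G.rev f :: B) := by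
  rw [flipCycle]
  set p : G.DEdge → Bool := fun g => g ∉ [e, G.rev e]
  have hA' : ∀ a ∈ A, p a = true := fun a ha => decide_eq_true (hA a ha)
  have hf' : ¬p f = true := by simp only [p, decide_eq_true_eq, not_not]; exact hf
  rw [List.dropWhile_append_of_pos hA', List.dropWhile_cons_of_neg hf']
  dsimp only
  set q : G.DEdge → Bool := fun g => g ≠ G.rev f
  have hB' : ∀ b ∈ B.reverse, q b = true := fun b hb =>
    decide_eq_true (by rintro rfl; exact hB (List.mem_reverse.mp hb))
  have hq : ¬q (G.rev f) = true := by simp [q]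
  rw [List.takeWhile_append_of_pos hA', List.takeWhile_cons_of_neg hf', List.append_nil,
    List.reverse_append, List.reverse_cons, List.append_assoc, List.singleton_append,
    List.dropWhile_append_of_pos hB', List.takeWhile_append_of_pos hB',
    List.dropWhile_cons_of_neg hq, List.takeWhile_cons_of_neg hq]
  simp

lemma take_one_loopOf (A : List G.DEdge) (f : G.DEdge) (M B : List G.DEdge) :
    ∃ h, (A ++ [f]).take 1 = [h] ∧ (loopOf A f M B).take 1 = [h] := by
  cases A <;> simp [loopOf]

lemma flipLoop_loopOf {A M B : List G.DEdge} {f : G.DEdge} (hA : ∀ a ∈ A, a ∉ [e, G.rev e])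
    (hf : f ∈ [e, G.rev e]) (hB : G.rev f ∉ B) :
    flipLoop e (loopOf A f M B) = loopOf A f (G.wrev M) B := by
  obtain ⟨h, hT, hT'⟩ := take_one_loopOf A f M B
  rw [flipLoop, hT', loopOf, hT, List.dropLast_concat, flipCycle_eq hA hf hB, loopOf, hT]

lemma VisitsBoth.exists_eq_loopOf {l : List G.DEdge} (h : VisitsBoth e l) :
    ∃ A f M B, (∀ a ∈ A, a ∉ [e, G.rev e]) ∧ f ∈ [e, G.rev e] ∧ G.rev f ∉ B ∧
      l = loopOf A f M B := by
  obtain ⟨hloop, he, hre⟩ := h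
  have hcycle : ∀ g ∈ [e, G.rev e], g ∈ l.dropLast := by
    simpa using ⟨List.count_pos_iff.mp he, List.count_pos_iff.mp hre⟩
  obtain ⟨A, f, R, hc, hA, hf⟩ :=
    List.exists_eq_append_cons_of_exists ⟨e, hcycle e (by simp), (by simp : e ∈ [e, G.rev e])⟩
  have hrf : G.rev f ∈ R := by
    have hrf := rev_mem_pair hf
    rcases List.mem_append.mp (hc ▸ hcycle _ hrf) with h | h
    · exact absurd hrf (hA _ h)
    · exact (List.mem_cons.mp h).resolve_left (rev_ne_self f)
  obtain ⟨M, B, hR, hB⟩ := List.exists_eq_append_cons_not_mem hrf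
  refine ⟨A, f, M, B, hA, hf, hB, ?_⟩
  rw [← hloop.dropLast_append_take_one, hc, hR, loopOf]
  cases A <;> rfl

lemma visitsBoth_loopOf {A M B : List G.DEdge} {f : G.DEdge} (hf : f ∈ [e, G.rev e])
    (hc : (loopOf A f M B).IsChain G.IsStep) : VisitsBoth e (loopOf A f M B) := by
  obtain ⟨t, ht, -⟩ := take_one_loopOf A f M B
  have hdrop : (loopOf A f M B).dropLast = A ++ f :: (M ++ G.rev f :: B) := by
    rw [loopOf, ht, List.dropLast_concat]
  have hlen : 3 ≤ (loopOf A f M B).length := by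
    simp [loopOf, ht]
    omega
  have hvisits : ∀ g ∈ [e, G.rev e], 1 ≤ G.visits (loopOf A f M B) g := by
    intro g hg
    rw [visits, hdrop, Nat.one_le_iff_ne_zero, ← Nat.pos_iff_ne_zero, List.count_pos_iff]
    simp only [List.mem_cons, List.not_mem_nil, or_false] at hf hg
    rcases hf with rfl | rfl <;> rcases hg with rfl | rfl <;> simp
  refine ⟨⟨⟨by omega, hc⟩, hlen, ?_⟩, hvisits e (by simp), hvisits _ (by simp)⟩
  rw [loopOf, ht, List.getLast?_concat]
  cases A <;> simp_all

lemma isChain_block_of_loopOf {A M B : List G.DEdge} {f : G.DEdge}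
    (hc : (loopOf A f M B).IsChain G.IsStep) : (f :: (M ++ [G.rev f])).IsChain G.IsStep :=
  hc.infix ⟨A, B ++ (A ++ [f]).take 1, by simp [loopOf]⟩

lemma isChain_loopOf_wrev {A M B : List G.DEdge} {f : G.DEdge}
    (hc : (loopOf A f M B).IsChain G.IsStep) : (loopOf A f (G.wrev M) B).IsChain G.IsStep := by
  have hshape : ∀ M',
      loopOf A f M' B = A ++ (f :: (M' ++ [G.rev f])) ++ (B ++ (A ++ [f]).take 1) := by
    simp [loopOf]
  have hb := isChain_block_of_loopOf hc
  rw [hshape] at hc ⊢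
  refine hc.replace_middle ?_ rfl ?_
  · rw [← wrev_block]
    exact isChain_wrev hb
  · rw [← List.cons_append, ← List.cons_append, List.getLast?_concat, List.getLast?_concat]

lemma wlam_append_block (x : Sym2 G.V → ℝ) (A : List G.DEdge) (f : G.DEdge) (M : List G.DEdge)
    (z : G.DEdge) (R : List G.DEdge) :
    G.wlam x (A ++ f :: (M ++ z :: R)) =
      G.wlam x (A ++ [f]) * G.wlam x (f :: (M ++ [z])) * G.wlam x (z :: R) :=
  adjProd_append_cons_append_cons _ A f M z R

lemma wlam_loopOf_wrev (x : Sym2 G.V → ℝ) {A M B : List G.DEdge} {f : G.DEdge}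
    (hc : (loopOf A f M B).IsChain G.IsStep) :
    G.wlam x (loopOf A f (G.wrev M) B) = -G.wlam x (loopOf A f M B) := by
  have hshape : ∀ M',
      loopOf A f M' B = A ++ f :: (M' ++ G.rev f :: (B ++ (A ++ [f]).take 1)) := by
    simp [loopOf]
  rw [hshape, hshape, wlam_append_block, wlam_append_block,
    wlam_wrev_block x (isChain_block_of_loopOf hc)]
  ring

lemma visitsBoth_flipLoop {l : List G.DEdge} (h : VisitsBoth e l) :
    VisitsBoth e (flipLoop e l) := by
  obtain ⟨A, f, M, B, hA, hf, hB, rfl⟩ := h.exists_eq_loopOf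
  rw [flipLoop_loopOf hA hf hB]
  exact visitsBoth_loopOf hf (isChain_loopOf_wrev h.1.1.2)

lemma flipLoop_flipLoop {l : List G.DEdge} (h : VisitsBoth e l) :
    flipLoop e (flipLoop e l) = l := by
  obtain ⟨A, f, M, B, hA, hf, hB, rfl⟩ := h.exists_eq_loopOf
  rw [flipLoop_loopOf hA hf hB, flipLoop_loopOf hA hf hB, wrev_wrev]

lemma length_flipLoop {l : List G.DEdge} (h : VisitsBoth e l) :
    (flipLoop e l).length = l.length := by
  obtain ⟨A, f, M, B, hA, hf, hB, rfl⟩ := h.exists_eq_loopOf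
  rw [flipLoop_loopOf hA hf hB]
  simp [loopOf, wrev]

lemma wlam_flipLoop (x : Sym2 G.V → ℝ) {l : List G.DEdge} (h : VisitsBoth e l) :
    G.wlam x (flipLoop e l) = -G.wlam x l := by
  obtain ⟨A, f, M, B, hA, hf, hB, rfl⟩ := h.exists_eq_loopOf
  rw [flipLoop_loopOf hA hf hB, wlam_loopOf_wrev x h.1.1.2]

end Flip

end PlaneGraph

theorem loop_sum_visits_both_eq_zero_general (G : PlaneGraph) (x : Sym2 G.V → ℝ) (e : G.DEdge) :
    ∑' ℓ : {l : List G.DEdge //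
        G.IsLoop l ∧ 1 ≤ G.visits l e ∧ 1 ≤ G.visits l (G.rev e)},
      G.wlam x ℓ.val / (G.len ℓ.val : ℂ) = 0 :=
  tsum_eq_zero_of_involutive
    (T := fun ℓ => ⟨PlaneGraph.flipLoop e ℓ, PlaneGraph.visitsBoth_flipLoop ℓ.2⟩)
    (fun ℓ => Subtype.ext (PlaneGraph.flipLoop_flipLoop ℓ.2))
    fun ℓ => by
      simp only [PlaneGraph.len, PlaneGraph.length_flipLoop ℓ.2, PlaneGraph.wlam_flipLoop x ℓ.2,
        neg_div]

/-- **Specific cancellations.** For any directed edge `e` and small weights,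
the signed measure of the set of loops which visit both `e` and `-e`
vanishes: `Σ_ℓ λ(ℓ)/|ℓ| = 0`. -/
theorem loop_sum_visits_both_eq_zero (G : PlaneGraph) (x : Sym2 G.V → ℝ)
    (Δ : ℕ) (hΔ : 2 ≤ Δ) (hdeg : ∀ v : G.V, G.degV v ≤ Δ)
    (hx : ∀ e ∈ G.E, |x e| < 1 / ((Δ : ℝ) - 1)) (e : G.DEdge) :
    ∑' ℓ : {l : List G.DEdge //
        G.IsLoop l ∧ 1 ≤ G.visits l e ∧ 1 ≤ G.visits l (G.rev e)},
      G.wlam x ℓ.val / (G.len ℓ.val : ℂ) = 0 :=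
  loop_sum_visits_both_eq_zero_general G x e
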